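/- arXiv:nlin/0307052 — 2 statements merged into one kernel-verified Lean document; each statement's English description precedes it below -/
import Mathlib

section
/- If A and B are n×n real symmetric matrices with zero row sums and nonpositive off-diagonal entries (i.e., A, B ∈ W), then λ2(A + B) ≥ λ2(A) + λ2(B). -/
/-!
For `A ∈ W` the quadratic form is a weighted sum of squares,
`2 xᵀ A x = ∑ᵢ ∑ⱼ (-Aᵢⱼ) (xᵢ - xⱼ)²`, hence nonnegative, so the infimum defining `λ₂(A)` is taken
over a set bounded below. As `xᵀ (A + B) x = xᵀ A x + xᵀ B x` and all three infima run over the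
same unit vectors orthogonal to `𝟙`, the infimum of the sum dominates the sum of the infima.
When there are no such vectors (`n < 2`) all three values are `sInf ∅ = 0`.
-/

open Matrix

/-- `W` : symmetric real matrices with zero row sums and nonpositive off-diagonal entries. -/
def memW {n : ℕ} (A : Matrix (Fin n) (Fin n) ℝ) : Prop :=
  A.IsSymm ∧ (∀ i, ∑ j, A i j = 0) ∧ ∀ i j, i ≠ j → A i j ≤ 0

/-- The second smallest eigenvalue of a matrix in `W` (for `n ≥ 2`), characterized as the
minimum of `xᵀ A x` over real vectors `x` with `∑ i, x i = 0` and `‖x‖ = 1`. -/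
noncomputable def lambda2 {n : ℕ} (A : Matrix (Fin n) (Fin n) ℝ) : ℝ :=
  sInf {r : ℝ | ∃ x : Fin n → ℝ, (∑ i, x i) = 0 ∧ (∑ i, (x i) ^ 2) = 1 ∧
    r = x ⬝ᵥ A.mulVec x}

lemma sInf_image_add_sInf_image_le {α : Type*} {S : Set α} {f g : α → ℝ}
    (hf : BddBelow (f '' S)) (hg : BddBelow (g '' S)) :
    sInf (f '' S) + sInf (g '' S) ≤ sInf ((fun x => f x + g x) '' S) := by
  rcases S.eq_empty_or_nonempty with rfl | hS
  · simp
  refine le_csInf (hS.image _) ?_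
  rintro _ ⟨x, hx, rfl⟩
  exact add_le_add (csInf_le hf ⟨x, hx, rfl⟩) (csInf_le hg ⟨x, hx, rfl⟩)

lemma Matrix.IsSymm.two_mul_dotProduct_mulVec_eq_sum_sq {ι : Type*} [Fintype ι]
    {A : Matrix ι ι ℝ} (hA : A.IsSymm) (hrow : ∀ i, ∑ j, A i j = 0) (x : ι → ℝ) :
    2 * (x ⬝ᵥ A *ᵥ x) = ∑ i, ∑ j, -A i j * (x i - x j) ^ 2 := by
  have hleft : ∑ i, ∑ j, A i j * x i ^ 2 = 0 := by
    simp [← Finset.sum_mul, hrow]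
  have hright : ∑ i, ∑ j, A i j * x j ^ 2 = 0 := by
    rw [Finset.sum_comm]
    simp [← Finset.sum_mul, ← hA.apply, hrow]
  have hcross : x ⬝ᵥ A *ᵥ x = ∑ i, ∑ j, A i j * x i * x j := by
    simp only [dotProduct, mulVec, Finset.mul_sum]
    exact Finset.sum_congr rfl fun i _ => Finset.sum_congr rfl fun j _ => by ring
  calc 2 * (x ⬝ᵥ A *ᵥ x)
      = 2 * (x ⬝ᵥ A *ᵥ x) - ∑ i, ∑ j, A i j * x i ^ 2 - ∑ i, ∑ j, A i j * x j ^ 2 := by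
        rw [hleft, hright, sub_zero, sub_zero]
    _ = ∑ i, ∑ j, -A i j * (x i - x j) ^ 2 := by
        simp only [hcross, Finset.mul_sum, ← Finset.sum_sub_distrib]
        exact Finset.sum_congr rfl fun i _ => Finset.sum_congr rfl fun j _ => by ring

lemma memW.dotProduct_mulVec_nonneg {n : ℕ} {A : Matrix (Fin n) (Fin n) ℝ} (hA : memW A)
    (x : Fin n → ℝ) : 0 ≤ x ⬝ᵥ A *ᵥ x := by
  obtain ⟨hsymm, hrow, hoff⟩ := hA
  have hsum : 0 ≤ ∑ i, ∑ j, -A i j * (x i - x j) ^ 2 := by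
    refine Finset.sum_nonneg fun i _ => Finset.sum_nonneg fun j _ => ?_
    rcases eq_or_ne i j with rfl | hij
    · simp
    · exact mul_nonneg (neg_nonneg.2 (hoff i j hij)) (sq_nonneg _)
  linarith [hsymm.two_mul_dotProduct_mulVec_eq_sum_sq hrow x]

def sumZeroUnitVectors (ι : Type*) [Fintype ι] : Set (ι → ℝ) :=
  {x | ∑ i, x i = 0 ∧ ∑ i, x i ^ 2 = 1}

lemma lambda2_eq_sInf_image {n : ℕ} (A : Matrix (Fin n) (Fin n) ℝ) :
    lambda2 A = sInf ((fun x => x ⬝ᵥ A *ᵥ x) '' sumZeroUnitVectors (Fin n)) := by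
  rw [lambda2]
  congr 1
  ext r
  simp [sumZeroUnitVectors, and_assoc, eq_comm]

theorem lambda2_superadditive_general {n : ℕ}
    (A B : Matrix (Fin n) (Fin n) ℝ) (hA : memW A) (hB : memW B) :
    lambda2 (A + B) ≥ lambda2 A + lambda2 B := by
  have hbdd : ∀ {M : Matrix (Fin n) (Fin n) ℝ}, memW M →
      BddBelow ((fun x => x ⬝ᵥ M *ᵥ x) '' sumZeroUnitVectors (Fin n)) :=
    fun hM => ⟨0, by rintro _ ⟨x, -, rfl⟩; exact hM.dotProduct_mulVec_nonneg x⟩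
  simp only [lambda2_eq_sInf_image, add_mulVec, dotProduct_add]
  exact sInf_image_add_sInf_image_le (hbdd hA) (hbdd hB)

/-- Super-additivity of `λ₂`: if `A, B ∈ W` then `λ₂(A + B) ≥ λ₂(A) + λ₂(B)`. -/
theorem lambda2_superadditive {n : ℕ} (hn : 2 ≤ n)
    (A B : Matrix (Fin n) (Fin n) ℝ) (hA : memW A) (hB : memW B) :
    lambda2 (A + B) ≥ lambda2 A + lambda2 B :=
  lambda2_superadditive_general A B hA hB
end

section
/- Given 0 < p ≤ 1, r > 0, and s ∈ ℝ, for all sufficiently large n there exists an n×n matrix ΔG in W such that: (i) λ2(ΔG) > s; (ii) the number of nonzero off-diagonal entries of ΔG is at most p·n(n−1); and (iii) every off-diagonal entry of ΔG has absolute value at most r. -/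
open Matrix

/-!
Fix `a > s / r` and take `r` times the Laplacian of the complete bipartite graph between a set
`S` of `a` vertices and its complement. Its off-diagonal entries are `0` or `-r`, and it has
`2 a (n - a) ≤ 2 a n` nonzero ones, which is at most `p n (n - 1)` once `n - 1 ≥ 2 a / p`.
On a vector `x` with `∑ x = 0` its quadratic form is
`r ∑_{i ∈ S, j ∉ S} (x i - x j)² = r ((n - a) ∑_S x² + a ∑_{Sᶜ} x² + 2 (∑_S x)²) ≥ r a ‖x‖²`
as soon as `a ≤ n - a`, so `λ₂ ≥ r a > s`.
-/

open Finset

theorem sum_sum_sub_sq {ι : Type*} (s t : Finset ι) (x : ι → ℝ) :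
    ∑ i ∈ s, ∑ j ∈ t, (x i - x j) ^ 2 =
      #t * ∑ i ∈ s, x i ^ 2 + #s * ∑ j ∈ t, x j ^ 2 - 2 * (∑ i ∈ s, x i) * ∑ j ∈ t, x j := by
  simp only [sub_sq, sum_add_distrib, sum_sub_distrib, sum_const, nsmul_eq_mul, ← mul_sum,
    ← sum_mul]
  ring

theorem min_card_mul_sum_sq_le_sum_sum_sub_sq {ι : Type*} [Fintype ι] [DecidableEq ι]
    (s : Finset ι) {x : ι → ℝ} (hx : ∑ i, x i = 0) :
    ((min #s #sᶜ : ℕ) : ℝ) * ∑ i, x i ^ 2 ≤ ∑ i ∈ s, ∑ j ∈ sᶜ, (x i - x j) ^ 2 := by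
  rw [sum_sum_sub_sq, ← sum_add_sum_compl s (fun i => x i ^ 2)]
  rw [← sum_add_sum_compl s] at hx
  have hs : ((min #s #sᶜ : ℕ) : ℝ) ≤ #s := by exact_mod_cast min_le_left _ _
  have hsc : ((min #s #sᶜ : ℕ) : ℝ) ≤ #sᶜ := by exact_mod_cast min_le_right _ _
  have h1 : 0 ≤ ∑ i ∈ s, x i ^ 2 := sum_nonneg fun i _ => sq_nonneg _
  have h2 : 0 ≤ ∑ i ∈ sᶜ, x i ^ 2 := sum_nonneg fun i _ => sq_nonneg _
  rw [eq_neg_of_add_eq_zero_right hx]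
  nlinarith [sq_nonneg (∑ i ∈ s, x i), mul_le_mul_of_nonneg_right hs h2,
    mul_le_mul_of_nonneg_right hsc h1]

theorem exists_sum_eq_zero_sum_sq_eq_one {n : ℕ} (hn : 2 ≤ n) :
    ∃ x : Fin n → ℝ, ∑ i, x i = 0 ∧ ∑ i, x i ^ 2 = 1 := by
  obtain ⟨m, rfl⟩ := Nat.exists_eq_add_of_le' hn
  refine ⟨Fin.cons √2⁻¹ (Fin.cons (-√2⁻¹) 0), ?_, ?_⟩
  · simp [Fin.sum_univ_succ]
  · simp [Fin.sum_univ_succ]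
    norm_num

theorem le_lambda2 {n : ℕ} (hn : 2 ≤ n) {A : Matrix (Fin n) (Fin n) ℝ} {c : ℝ}
    (h : ∀ x : Fin n → ℝ, ∑ i, x i = 0 → ∑ i, x i ^ 2 = 1 → c ≤ x ⬝ᵥ A *ᵥ x) :
    c ≤ lambda2 A := by
  obtain ⟨x, hx0, hx1⟩ := exists_sum_eq_zero_sum_sq_eq_one hn
  refine le_csInf ⟨_, x, hx0, hx1, rfl⟩ ?_
  rintro _ ⟨y, hy0, hy1, rfl⟩
  exact h y hy0 hy1

namespace SimpleGraph

variable {ι : Type*} [Fintype ι] [DecidableEq ι]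

def cutGraph (s : Finset ι) : SimpleGraph ι where
  Adj i j := ¬(i ∈ s ↔ j ∈ s)

instance (s : Finset ι) : DecidableRel (cutGraph s).Adj :=
  fun i j => inferInstanceAs (Decidable ¬(i ∈ s ↔ j ∈ s))

theorem lapMatrix_apply_of_ne (G : SimpleGraph ι) [DecidableRel G.Adj] {i j : ι} (hij : i ≠ j) :
    G.lapMatrix ℝ i j = -if G.Adj i j then 1 else 0 := by
  simp [lapMatrix, degMatrix, hij, adjMatrix_apply]

theorem sum_lapMatrix_row (G : SimpleGraph ι) [DecidableRel G.Adj] (i : ι) :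
    ∑ j, G.lapMatrix ℝ i j = 0 := by
  simpa [Matrix.mulVec, dotProduct] using congrFun (G.lapMatrix_mulVec_const_eq_zero (R := ℝ)) i

theorem memW_smul_lapMatrix {n : ℕ} (G : SimpleGraph (Fin n)) [DecidableRel G.Adj] {r : ℝ}
    (hr : 0 ≤ r) : memW (r • G.lapMatrix ℝ) := by
  refine ⟨(G.isSymm_lapMatrix ℝ).smul r, fun i => ?_, fun i j hij => ?_⟩
  · simp only [Matrix.smul_apply, smul_eq_mul, ← mul_sum, sum_lapMatrix_row, mul_zero]
  · rw [Matrix.smul_apply, lapMatrix_apply_of_ne G hij, smul_eq_mul]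
    split_ifs <;> linarith

theorem abs_smul_lapMatrix_apply_le (G : SimpleGraph ι) [DecidableRel G.Adj] (r : ℝ) {i j : ι}
    (hij : i ≠ j) : |(r • G.lapMatrix ℝ) i j| ≤ |r| := by
  rw [Matrix.smul_apply, lapMatrix_apply_of_ne G hij, smul_eq_mul]
  split_ifs <;> simp

theorem setOf_smul_lapMatrix_offDiag_ne_zero (G : SimpleGraph ι) [DecidableRel G.Adj] {r : ℝ}
    (hr : r ≠ 0) :
    {q : ι × ι | q.1 ≠ q.2 ∧ (r • G.lapMatrix ℝ) q.1 q.2 ≠ 0} = {q | G.Adj q.1 q.2} := by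
  ext ⟨i, j⟩
  by_cases hij : i = j
  · simp [hij]
  · simp [lapMatrix_apply_of_ne G hij, hij, hr]

theorem ncard_cutGraph_adj_le (s : Finset ι) :
    {q : ι × ι | (cutGraph s).Adj q.1 q.2}.ncard ≤ 2 * #s * #sᶜ := by
  have hsub : {q : ι × ι | (cutGraph s).Adj q.1 q.2} ⊆ ↑(s ×ˢ sᶜ ∪ sᶜ ×ˢ s) := by
    rintro ⟨i, j⟩ hij
    by_cases hi : i ∈ s <;> simp_all [cutGraph]
  calc _ ≤ #(s ×ˢ sᶜ ∪ sᶜ ×ˢ s) := by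
        simpa only [Set.ncard_coe_finset] using Set.ncard_le_ncard hsub
    _ ≤ #(s ×ˢ sᶜ) + #(sᶜ ×ˢ s) := card_union_le _ _
    _ = 2 * #s * #sᶜ := by rw [card_product, card_product]; ring

theorem dotProduct_lapMatrix_cutGraph_mulVec (s : Finset ι) (x : ι → ℝ) :
    x ⬝ᵥ ((cutGraph s).lapMatrix ℝ *ᵥ x) = ∑ i ∈ s, ∑ j ∈ sᶜ, (x i - x j) ^ 2 := by
  rw [← Matrix.toLinearMap₂'_apply', lapMatrix_toLinearMap₂']
  have hrow : ∀ i, (∑ j, if (cutGraph s).Adj i j then (x i - x j) ^ 2 else 0) =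
      if i ∈ s then ∑ j ∈ sᶜ, (x i - x j) ^ 2 else ∑ j ∈ s, (x i - x j) ^ 2 := by
    intro i
    split_ifs with hi <;> rw [← sum_filter] <;> congr 1 <;> ext j <;> simp [cutGraph, hi]
  have hswap : ∑ i ∈ sᶜ, ∑ j ∈ s, (x i - x j) ^ 2 = ∑ i ∈ s, ∑ j ∈ sᶜ, (x i - x j) ^ 2 := by
    rw [sum_comm]
    exact sum_congr rfl fun i _ => sum_congr rfl fun j _ => by ring
  have hcompl : ({i | i ∉ s} : Finset ι) = sᶜ := by ext; simp
  simp_rw [hrow, sum_ite, filter_mem_eq_inter, univ_inter, hcompl, hswap]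
  ring

theorem mul_min_card_le_lambda2_smul_lapMatrix_cutGraph {n : ℕ} (hn : 2 ≤ n) {r : ℝ}
    (hr : 0 ≤ r) (s : Finset (Fin n)) :
    r * (min #s #sᶜ : ℕ) ≤ lambda2 (r • (cutGraph s).lapMatrix ℝ) := by
  refine le_lambda2 hn fun x hx0 hx1 => ?_
  rw [Matrix.smul_mulVec, dotProduct_smul, dotProduct_lapMatrix_cutGraph_mulVec, smul_eq_mul]
  have hcut := min_card_mul_sum_sq_le_sum_sum_sub_sq s hx0
  rw [hx1, mul_one] at hcut
  exact mul_le_mul_of_nonneg_left hcut hr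

end SimpleGraph

/-- Given `0 < p ≤ 1`, `r > 0` and `s`, for all sufficiently large `n` there exists an
`n × n` matrix `ΔG ∈ W` with `λ₂(ΔG) > s`, at most a fraction `p` of whose off-diagonal
entries are nonzero, and each of whose off-diagonal entries is at most `r` in absolute
value. -/
theorem exists_sparse_small_perturbation_with_large_lambda2
    (p : ℝ) (hp0 : 0 < p) (hp1 : p ≤ 1) (r : ℝ) (hr : 0 < r) (s : ℝ) :
    ∃ N : ℕ, ∀ n : ℕ, N ≤ n →
      ∃ ΔG : Matrix (Fin n) (Fin n) ℝ, memW ΔG ∧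
        lambda2 ΔG > s ∧
        ({q : Fin n × Fin n | q.1 ≠ q.2 ∧ ΔG q.1 q.2 ≠ 0}.ncard : ℝ) ≤ p * n * (n - 1) ∧
        ∀ i j, i ≠ j → |ΔG i j| ≤ r := by
  obtain ⟨a, ha⟩ := exists_nat_gt (s / r)
  obtain ⟨M, hM⟩ := exists_nat_gt (2 * a / p)
  refine ⟨M + 2, fun n hn => ?_⟩
  have hn' : (M : ℝ) + 2 ≤ n := by exact_mod_cast hn
  have hpn : 2 * a ≤ p * (n - 1) := by
    rw [div_lt_iff₀ hp0] at hM
    nlinarith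
  have han : 2 * a ≤ n := by exact_mod_cast (by nlinarith : (2 * a : ℝ) ≤ n)
  obtain ⟨S, -, hS⟩ := exists_subset_card_eq (s := (univ : Finset (Fin n))) (n := a)
    (by rw [card_univ, Fintype.card_fin]; omega)
  have hmin : min #S #Sᶜ = a := by
    rw [card_compl, hS, Fintype.card_fin]
    omega
  let G := SimpleGraph.cutGraph S
  refine ⟨r • G.lapMatrix ℝ, G.memW_smul_lapMatrix hr.le, ?_, ?_, fun i j hij => ?_⟩
  · have hG := SimpleGraph.mul_min_card_le_lambda2_smul_lapMatrix_cutGraph (by omega) hr.le S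
    rw [hmin] at hG
    rw [div_lt_iff₀ hr] at ha
    linarith
  · rw [G.setOf_smul_lapMatrix_offDiag_ne_zero hr.ne']
    calc _ ≤ ((2 * #S * #Sᶜ : ℕ) : ℝ) := by exact_mod_cast SimpleGraph.ncard_cutGraph_adj_le S
      _ ≤ 2 * a * n := by
        rw [hS]
        push_cast
        gcongr
        simpa using card_le_univ Sᶜ
      _ ≤ p * n * (n - 1) := by nlinarith
  · simpa [abs_of_pos hr] using G.abs_smul_lapMatrix_apply_le r hij
end
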